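/- In the modified game graph G' constructed from a parity game G and a rooted tree decomposition (T, X), for every edge (v, u) of the original game G there exists a directed path from v to u in G' all of whose intermediate vertices are copies v_i of v, and every vertex on this path has the same priority as v except the last, which has the priority of u. -/

import Mathlib

/-- Vertices of the modified game `G'`: original vertices together with copies
`v_i` for every tree-decomposition node `i` containing `v` other than
`first v`. -/
def ModVertex {V I : Type} (X : I → Set V) (first : V → I) : Type :=
  V ⊕ {p : V × I // p.1 ∈ X p.2 ∧ p.2 ≠ first p.1}

/-- Edges of the modified game `G'` (Definition of the modified parity game). -/
def ModEdge {V I : Type} (E : V → V → Prop) (J : I → I → Prop)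
    (X : I → Set V) (first : V → I) :
    ModVertex X first → ModVertex X first → Prop
  | Sum.inl v, Sum.inl u => u ∈ X (first v) ∧ E v u
  | Sum.inl v, Sum.inr w => w.1.1 = v ∧ J (first v) w.1.2
  | Sum.inr w, Sum.inl u => u ∈ X w.1.2 ∧ E w.1.1 u
  | Sum.inr w, Sum.inr w' => w'.1.1 = w.1.1 ∧ J w.1.2 w'.1.2

/-- Priorities in the modified game: every copy `v_i` gets the priority of `v`. -/
def ModPri {V I : Type} {X : I → Set V} {first : V → I} (pri : V → ℕ) :
    ModVertex X first → ℕ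
  | Sum.inl v => pri v
  | Sum.inr w => pri w.1.1

/-!
Pick a bag `X i` containing both `v` and `u`. A tree path from `first v` to `i` runs through
bags containing `v` (connectivity), and cutting it at its last visit to `first v` leaves a path
whose later nodes `a` all index copies `v_a`. In `G'` this is the path `v → v_a → ⋯ → v_i`,
followed by the edge `v_i → u`.
-/

namespace Relation.ReflTransGen

variable {α : Type*} {R : α → α → Prop}

theorem exists_fin_path {a b : α} (h : ReflTransGen R a b) :
    ∃ (n : ℕ) (p : Fin (n + 1) → α), p 0 = a ∧ p (Fin.last n) = b ∧
      ∀ t : Fin n, R (p t.castSucc) (p t.succ) := by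
  induction h using Relation.ReflTransGen.head_induction_on with
  | refl => exact ⟨0, fun _ => b, rfl, rfl, Fin.elim0⟩
  | head hac _ ih =>
    obtain ⟨n, p, hp0, hpn, hstep⟩ := ih
    refine ⟨n + 1, Fin.cons _ p, rfl, by rw [← Fin.succ_last, Fin.cons_succ, hpn], ?_⟩
    intro t
    cases t using Fin.cases with
    | zero => simpa only [Fin.castSucc_zero, Fin.cons_zero, Fin.cons_succ, hp0] using hac
    | succ j => simpa only [← Fin.succ_castSucc, Fin.cons_succ] using hstep j

theorem subtype_avoiding_head {S : α → Prop} {a b : α} (ha : S a)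
    (hpred : ∀ c d, ReflTransGen R a c → R c d → S d → S c)
    (h : ReflTransGen R a b) (hb : S b) :
    ReflTransGen (fun x y : Subtype S => R x y ∧ y.1 ≠ a) ⟨a, ha⟩ ⟨b, hb⟩ := by
  induction h with
  | refl => rfl
  | @tail c d hac hcd ih =>
    -- a return to `a` restarts the path there
    by_cases hda : d = a
    · subst hda
      rfl
    · exact (ih (hpred c d hac hcd hb)).tail ⟨hcd, hda⟩

end Relation.ReflTransGen

namespace ModVertex

variable {V I : Type} {X : I → Set V} (first : V → I) {v : V} {a b : I}

open Classical in
/-- The paper's `v_a`, where `v_{first v}` is `v` itself. -/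
noncomputable def copy (hv : v ∈ X a) : ModVertex X first :=
  if h : a = first v then Sum.inl v else Sum.inr ⟨(v, a), hv, h⟩

theorem copy_first (hv : v ∈ X (first v)) : copy first hv = Sum.inl v := by
  unfold copy
  exact dif_pos rfl

theorem copy_of_ne (hv : v ∈ X a) (h : a ≠ first v) :
    copy first hv = Sum.inr ⟨(v, a), hv, h⟩ := by
  unfold copy
  exact dif_neg h

theorem modPri_copy (pri : V → ℕ) (hv : v ∈ X a) : ModPri pri (copy first hv) = pri v := by
  by_cases hav : a = first v
  · subst hav
    rw [copy_first]
    rfl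
  · rw [copy_of_ne first hv hav]
    rfl

theorem modEdge_copy_copy (E : V → V → Prop) {J : I → I → Prop} (ha : v ∈ X a)
    (hb : v ∈ X b) (hab : J a b) (hbv : b ≠ first v) :
    ModEdge E J X first (copy first ha) (copy first hb) := by
  rw [copy_of_ne first hb hbv]
  by_cases hav : a = first v
  · subst hav
    rw [copy_first]
    exact ⟨rfl, hab⟩
  · rw [copy_of_ne first ha hav]
    exact ⟨rfl, hab⟩

theorem modEdge_copy_inl {E : V → V → Prop} (J : I → I → Prop) {u : V} (ha : v ∈ X a)
    (hu : u ∈ X a) (hvu : E v u) :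
    ModEdge E J X first (copy first ha) (Sum.inl u) := by
  by_cases hav : a = first v
  · subst hav
    rw [copy_first]
    exact ⟨hu, hvu⟩
  · rw [copy_of_ne first ha hav]
    exact ⟨hu, hvu⟩

end ModVertex

theorem stmt_15_general {V I : Type}
    (E : V → V → Prop) (J : I → I → Prop)
    (X : I → Set V) (pri : V → ℕ) (first : V → I)
    (hcover : ∀ v u : V, E v u → ∃ i : I, v ∈ X i ∧ u ∈ X i)
    (hfirst₁ : ∀ v : V, v ∈ X (first v))
    (hfirst₂ : ∀ (v : V) (i : I), v ∈ X i → Relation.ReflTransGen J (first v) i)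
    (hconn : ∀ (v : V) (i k j : I), v ∈ X i → v ∈ X j →
      Relation.ReflTransGen J i k → Relation.ReflTransGen J k j → v ∈ X k)
    (v u : V) (hvu : E v u) :
    ∃ (n : ℕ) (p : Fin (n + 1) → ModVertex X first),
      p 0 = Sum.inl v ∧
      p (Fin.last n) = Sum.inl u ∧
      (∀ t : Fin n, ModEdge E J X first (p t.castSucc) (p t.succ)) ∧
      (∀ t : Fin (n + 1), t ≠ 0 → t ≠ Fin.last n →
        ∃ (i : I) (h : v ∈ X i ∧ i ≠ first v), p t = Sum.inr ⟨(v, i), h⟩) ∧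
      (∀ t : Fin (n + 1), t ≠ Fin.last n → ModPri pri (p t) = pri v) ∧
      ModPri pri (p (Fin.last n)) = pri u := by
  obtain ⟨i, hvi, hui⟩ := hcover v u hvu
  have hpath := (hfirst₂ v i hvi).subtype_avoiding_head (S := (v ∈ X ·)) (hfirst₁ v)
    (fun c d hc hcd hd => hconn v _ c d (hfirst₁ v) hd hc (.single hcd)) hvi
  obtain ⟨n, q, hq0, hqn, hstep⟩ := hpath.exists_fin_path
  obtain ⟨p, hp_cast, hp_last⟩ : ∃ p : Fin (n + 2) → ModVertex X first,
      (∀ s, p s.castSucc = ModVertex.copy first (q s).2) ∧ p (Fin.last _) = Sum.inl u :=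
    ⟨Fin.snoc (fun s => ModVertex.copy first (q s).2) (Sum.inl u),
      fun _ => Fin.snoc_castSucc .., Fin.snoc_last ..⟩
  refine ⟨n + 1, p, ?_, hp_last, fun t => ?_, fun t ht0 htn => ?_, fun t htn => ?_,
    by rw [hp_last]; rfl⟩
  · rw [← Fin.castSucc_zero, hp_cast, hq0]
    exact ModVertex.copy_first first (hfirst₁ v)
  · cases t using Fin.lastCases with
    | last =>
      rw [hp_cast, Fin.succ_last, hp_last, hqn]
      exact ModVertex.modEdge_copy_inl first J hvi hui hvu
    | cast j =>
      rw [hp_cast, Fin.succ_castSucc, hp_cast]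
      exact ModVertex.modEdge_copy_copy first E _ _ (hstep j).1 (hstep j).2
  · obtain ⟨s, rfl⟩ := Fin.exists_castSucc_eq.2 htn
    obtain ⟨j, rfl⟩ := Fin.exists_succ_eq_of_ne_zero (x := s) (by rintro rfl; exact ht0 rfl)
    rw [hp_cast, ModVertex.copy_of_ne first _ (hstep j).2]
    exact ⟨_, _, rfl⟩
  · obtain ⟨s, rfl⟩ := Fin.exists_castSucc_eq.2 htn
    rw [hp_cast]
    exact ModVertex.modPri_copy first pri _

/-- In the modified game graph `G'` built from a parity game and
a rooted (directed) tree decomposition, for every edge `(v, u)` of the original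
game there is a directed path in `G'` from `v` to `u` all of whose intermediate
vertices are copies `v_i` of `v`; every vertex on the path has the priority of
`v` except the last, which has the priority of `u`. -/
theorem stmt_15 {V I : Type} [Fintype I]
    (E : V → V → Prop) (J : I → I → Prop) (r : I)
    (hreach : ∀ i : I, Relation.ReflTransGen J r i)
    (hparent : ∀ i : I, i ≠ r → ∃! p : I, J p i)
    (hroot : ∀ p : I, ¬ J p r)
    (X : I → Set V) (pri : V → ℕ) (first : V → I)
    (hcover : ∀ v u : V, E v u → ∃ i : I, v ∈ X i ∧ u ∈ X i)
    (hfirst₁ : ∀ v : V, v ∈ X (first v))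
    (hfirst₂ : ∀ (v : V) (i : I), v ∈ X i → Relation.ReflTransGen J (first v) i)
    (hconn : ∀ (v : V) (i k j : I), v ∈ X i → v ∈ X j →
      Relation.ReflTransGen J i k → Relation.ReflTransGen J k j → v ∈ X k)
    (v u : V) (hvu : E v u) :
    ∃ (n : ℕ) (p : Fin (n + 1) → ModVertex X first),
      p 0 = Sum.inl v ∧
      p (Fin.last n) = Sum.inl u ∧
      (∀ t : Fin n, ModEdge E J X first (p t.castSucc) (p t.succ)) ∧
      (∀ t : Fin (n + 1), t ≠ 0 → t ≠ Fin.last n →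
        ∃ (i : I) (h : v ∈ X i ∧ i ≠ first v), p t = Sum.inr ⟨(v, i), h⟩) ∧
      (∀ t : Fin (n + 1), t ≠ Fin.last n → ModPri pri (p t) = pri v) ∧
      ModPri pri (p (Fin.last n)) = pri u :=
  stmt_15_general E J X pri first hcover hfirst₁ hfirst₂ hconn v u hvu
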